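/- Let L ≥ 1 be odd, N ≥ 1, and let nonnegative real link capacities be given: R⁽⁰⁾_j for j ∈ {1,…,N}, R⁽ˡ⁾_{ij} for 1 ≤ l ≤ L−1 and i,j ∈ {1,…,N}, and R⁽ᴸ⁾_i for i ∈ {1,…,N}. Define C̃ = min over all tuples Y = (y₁,…,y_L) of subsets of {1,…,N} of Σ_{l=0}^{L} min(|y_l|,|y_{l+1}^c|)·max_{i∈y_l, j∈y_{l+1}^c} R⁽ˡ⁾_{ij}, with conventions y₀ = {S} (|y₀| = 1), y_{L+1}^c = {D} (size 1), and a term equal to 0 when y_l or y_{l+1}^c is empty. Then there exists a path (i₁,…,i_L) ∈ {1,…,N}^L such that min{R⁽⁰⁾_{i₁}, min_{1≤l≤L−1} R⁽ˡ⁾_{i_l i_{l+1}}, R⁽ᴸ⁾_{i_L}} ≥ (2/((L−1)N + 4))·C̃. -/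

import Mathlib

open scoped BigOperators

/-- Maximum of `f` over a finite set, `0` if the set is empty. -/
noncomputable def maxOnZero {α : Type*} (s : Finset α) (f : α → ℝ) : ℝ :=
  if h : s.Nonempty then s.sup' h f else 0

/-- The single-link relaxation of the value of the cut `y` in a layered network with
`L` relay layers of `N` relays each and link capacities `R0` (source to first layer),
`Rmid l i j` (relay `(l,i)` to relay `(l+1,j)`, `1 ≤ l ≤ L−1`) and `RL` (last layer to
destination): `Σ_{l=0}^{L} min(|y_l|,|y_{l+1}ᶜ|) · max_{i ∈ y_l, j ∈ y_{l+1}ᶜ} R⁽ˡ⁾_{ij}`,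
with `y₀ = {S}`, `y_{L+1}ᶜ = {D}`, a term being `0` when an index set is empty. -/
noncomputable def tildeCutValueR (L N : ℕ) (R0 : Fin N → ℝ)
    (Rmid : ℕ → Fin N → Fin N → ℝ) (RL : Fin N → ℝ)
    (y : ℕ → Finset (Fin N)) : ℝ :=
  (min 1 ((y 0)ᶜ.card) : ℝ) * maxOnZero ((y 0)ᶜ) R0
    + ∑ k ∈ Finset.range (L - 1),
        (min ((y k).card) (((y (k + 1))ᶜ).card) : ℝ) *
          maxOnZero ((y k) ×ˢ ((y (k + 1))ᶜ)) (fun p => Rmid (k + 1) p.1 p.2)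
    + (min ((y (L - 1)).card) 1 : ℝ) * maxOnZero (y (L - 1)) RL

/-- `C̃`: the minimum over all cuts of the single-link relaxation of the cut value. -/
noncomputable def tildeCapR (L N : ℕ) (R0 : Fin N → ℝ)
    (Rmid : ℕ → Fin N → Fin N → ℝ) (RL : Fin N → ℝ) : ℝ :=
  sInf {c : ℝ | ∃ y : ℕ → Finset (Fin N), c = tildeCutValueR L N R0 Rmid RL y}

/-- Capacity of the path choosing relay `i k` in layer `k+1`: the minimum of its `L+1`
link capacities. -/
noncomputable def pathCapR (L N : ℕ) (R0 : Fin N → ℝ)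
    (Rmid : ℕ → Fin N → Fin N → ℝ) (RL : Fin N → ℝ) (i : ℕ → Fin N) : ℝ :=
  (Finset.range (L + 1)).inf' ⟨0, by simp⟩ (fun t =>
    if t = 0 then R0 (i 0)
    else if t = L then RL (i (L - 1))
    else Rmid t (i (t - 1)) (i t))


lemma maxOnZero_le {α : Type*} {s : Finset α} {f : α → ℝ} {c : ℝ} (hc : 0 ≤ c)
    (h : ∀ x ∈ s, f x ≤ c) : maxOnZero s f ≤ c := by
  unfold maxOnZero
  split
  · exact Finset.sup'_le _ _ h
  · exact hc

lemma maxOnZero_nonneg {α : Type*} {s : Finset α} {f : α → ℝ} (h : ∀ x ∈ s, 0 ≤ f x) :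
    0 ≤ maxOnZero s f := by
  unfold maxOnZero
  split
  case isTrue h' =>
    obtain ⟨x, hx⟩ := h'
    exact le_trans (h x hx) (Finset.le_sup' f hx)
  case isFalse => exact le_refl 0

lemma le_maxOnZero {α : Type*} {s : Finset α} {f : α → ℝ} {x : α} (hx : x ∈ s) :
    f x ≤ maxOnZero s f := by
  unfold maxOnZero
  split
  · exact Finset.le_sup' f hx
  case isFalse h => exact absurd ⟨x, hx⟩ h

lemma exists_maxOnZero {α : Type*} {s : Finset α} (hs : s.Nonempty) (f : α → ℝ) :
    ∃ x ∈ s, maxOnZero s f = f x := by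
  obtain ⟨x, hx, hfx⟩ := Finset.exists_mem_eq_sup' hs f
  exact ⟨x, hx, by unfold maxOnZero; rw [dif_pos hs, hfx]⟩

noncomputable def gFn (N : ℕ) (R0 : Fin N → ℝ) (Rmid : ℕ → Fin N → Fin N → ℝ) :
    ℕ → Fin N → ℝ
  | 0 => R0
  | (t+1) => fun j => maxOnZero Finset.univ (fun i => min (gFn N R0 Rmid t i) (Rmid (t+1) i j))

lemma gFn_nonneg (N : ℕ) (R0 : Fin N → ℝ) (Rmid : ℕ → Fin N → Fin N → ℝ)
    (hR0 : ∀ j, 0 ≤ R0 j) (hRmid : ∀ l i j, 0 ≤ Rmid l i j) :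
    ∀ t j, 0 ≤ gFn N R0 Rmid t j := by
  intro t
  induction t with
  | zero => exact hR0
  | succ t ih =>
    intro j
    exact maxOnZero_nonneg (fun i _ => le_min (ih i) (hRmid _ i j))

lemma exists_path (N : ℕ) (R0 : Fin N → ℝ) (Rmid : ℕ → Fin N → Fin N → ℝ)
    (t : ℕ) (j : Fin N) :
    ∃ i : ℕ → Fin N, i t = j ∧ gFn N R0 Rmid t j ≤ R0 (i 0) ∧
      ∀ s, 1 ≤ s → s ≤ t → gFn N R0 Rmid t j ≤ Rmid s (i (s-1)) (i s) := by
  induction t generalizing j with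
  | zero =>
    exact ⟨fun _ => j, rfl, le_refl _, fun s hs hs' => absurd (hs.trans hs') (by simp)⟩
  | succ t ih =>
    have hne : (Finset.univ : Finset (Fin N)).Nonempty := ⟨j, Finset.mem_univ j⟩
    obtain ⟨i0, -, hi0⟩ := exists_maxOnZero hne
      (fun i => min (gFn N R0 Rmid t i) (Rmid (t+1) i j))
    have hg : gFn N R0 Rmid (t+1) j = min (gFn N R0 Rmid t i0) (Rmid (t+1) i0 j) := hi0
    obtain ⟨i, hit, h0, hmid⟩ := ih i0
    refine ⟨Function.update i (t+1) j, Function.update_self _ _ _, ?_, ?_⟩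
    · rw [Function.update_of_ne (by omega)]
      exact le_trans (hg.le.trans (min_le_left _ _)) h0
    · intro s hs hs'
      rcases eq_or_lt_of_le hs' with h | h
      · rw [h, show t + 1 - 1 = t from rfl, Function.update_of_ne (by omega),
          Function.update_self, hit]
        exact hg.le.trans (min_le_right _ _)
      · have hs2 : s ≤ t := by omega
        rw [Function.update_of_ne (by omega), Function.update_of_ne (by omega)]
        exact le_trans (hg.le.trans (min_le_left _ _)) (hmid s hs hs2)

lemma sum_range_two_mul (m : ℕ) (a : ℕ → ℕ) :
    ∑ k ∈ Finset.range (2 * m), a k = ∑ p ∈ Finset.range m, (a (2 * p) + a (2 * p + 1)) := by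
  induction m with
  | zero => simp
  | succ m ih =>
    rw [Finset.sum_range_succ, ← ih, show 2 * (m + 1) = 2 * m + 1 + 1 by ring,
      Finset.sum_range_succ, Finset.sum_range_succ, add_assoc]



/-- For odd `L ≥ 1`, `N ≥ 1` and nonnegative link capacities, there is a path whose
capacity is at least `(2/((L−1)N + 4))·C̃`. -/
theorem path_from_tilde_odd (L N : ℕ) (hLodd : Odd L) (hN : 1 ≤ N)
    (R0 : Fin N → ℝ) (Rmid : ℕ → Fin N → Fin N → ℝ) (RL : Fin N → ℝ)
    (hR0 : ∀ j, 0 ≤ R0 j) (hRmid : ∀ l i j, 0 ≤ Rmid l i j) (hRL : ∀ i, 0 ≤ RL i) :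
    ∃ i : ℕ → Fin N,
      (2 / (((L : ℝ) - 1) * (N : ℝ) + 4)) * tildeCapR L N R0 Rmid RL ≤
        pathCapR L N R0 Rmid RL i := by
  obtain ⟨m, hm⟩ := hLodd
  have hgnn := gFn_nonneg N R0 Rmid hR0 hRmid
  have hne : (Finset.univ : Finset (Fin N)).Nonempty := ⟨⟨0, hN⟩, Finset.mem_univ _⟩
  set g : ℕ → Fin N → ℝ := gFn N R0 Rmid with hgdef
  set τ : ℝ := maxOnZero Finset.univ (fun j => min (g (L-1) j) (RL j)) with hτdef
  have hτnn : 0 ≤ τ := maxOnZero_nonneg (fun j _ => le_min (hgnn _ j) (hRL j))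
  obtain ⟨j0, -, hj0⟩ := exists_maxOnZero hne (fun j => min (g (L-1) j) (RL j))
  obtain ⟨i, hiL, h0, hmid⟩ := exists_path N R0 Rmid (L-1) j0
  have hτg : τ ≤ g (L-1) j0 := hj0.le.trans (min_le_left _ _)
  have hτR : τ ≤ RL j0 := hj0.le.trans (min_le_right _ _)
  -- the path has capacity at least τ
  have hpath : τ ≤ pathCapR L N R0 Rmid RL i := by
    apply Finset.le_inf'
    intro t ht
    rw [Finset.mem_range] at ht
    split_ifs with h1 h2
    · exact hτg.trans h0
    · rw [hiL]; exact hτR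
    · exact hτg.trans (hmid t (by omega) (by omega))
  -- the cut
  set y : ℕ → Finset (Fin N) := fun t => Finset.univ.filter (fun j => τ < g t j) with hydef
  have hymem : ∀ t j, j ∈ y t ↔ τ < g t j := by
    intro t j; simp [hydef]
  have hycmem : ∀ t j, j ∈ (y t)ᶜ ↔ g t j ≤ τ := by
    intro t j; simp [hydef]
  -- every cut value is nonneg
  have hvnn : ∀ y' : ℕ → Finset (Fin N), 0 ≤ tildeCutValueR L N R0 Rmid RL y' := by
    intro y'
    unfold tildeCutValueR
    have hA : (0:ℝ) ≤ (min 1 ((y' 0)ᶜ.card) : ℝ) * maxOnZero ((y' 0)ᶜ) R0 :=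
      mul_nonneg (le_min zero_le_one (Nat.cast_nonneg _)) (maxOnZero_nonneg (fun j _ => hR0 j))
    have hC : (0:ℝ) ≤ (min ((y' (L-1)).card) 1 : ℝ) * maxOnZero (y' (L-1)) RL :=
      mul_nonneg (le_min (Nat.cast_nonneg _) zero_le_one) (maxOnZero_nonneg (fun j _ => hRL j))
    have hB : (0:ℝ) ≤ ∑ k ∈ Finset.range (L - 1),
        (min ((y' k).card) (((y' (k + 1))ᶜ).card) : ℝ) *
          maxOnZero ((y' k) ×ˢ ((y' (k + 1))ᶜ)) (fun p => Rmid (k + 1) p.1 p.2) :=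
      Finset.sum_nonneg fun k _ =>
        mul_nonneg (le_min (Nat.cast_nonneg _) (Nat.cast_nonneg _))
          (maxOnZero_nonneg (fun p _ => hRmid _ _ _))
    linarith
  have hCle : tildeCapR L N R0 Rmid RL ≤ tildeCutValueR L N R0 Rmid RL y := by
    apply csInf_le
    · exact ⟨0, fun c ⟨y', hy'⟩ => hy' ▸ hvnn y'⟩
    · exact ⟨y, rfl⟩
  -- bound the cut value
  have hgsucc : ∀ t j, g (t+1) j = maxOnZero Finset.univ
      (fun i => min (g t i) (Rmid (t+1) i j)) := fun t j => rfl
  have hA : (min 1 ((y 0)ᶜ.card) : ℝ) * maxOnZero ((y 0)ᶜ) R0 ≤ 1 * τ := by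
    apply mul_le_mul _ _ (maxOnZero_nonneg (fun j _ => hR0 j)) zero_le_one
    · exact min_le_left _ _
    · exact maxOnZero_le hτnn (fun j hj => (hycmem 0 j).1 hj)
  have hC : (min ((y (L-1)).card) 1 : ℝ) * maxOnZero (y (L-1)) RL ≤ 1 * τ := by
    apply mul_le_mul _ _ (maxOnZero_nonneg (fun j _ => hRL j)) zero_le_one
    · exact min_le_right _ _
    · apply maxOnZero_le hτnn
      intro j hj
      have h1 : τ < g (L-1) j := (hymem _ j).1 hj
      have h2 : min (g (L-1) j) (RL j) ≤ τ := by
        rw [hτdef]; exact le_maxOnZero (f := fun j => min (g (L-1) j) (RL j)) (Finset.mem_univ j)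
      by_contra hcon
      exact absurd (lt_min h1 (not_le.1 hcon)) (not_lt.2 h2)
  have hBterm : ∀ k, (min ((y k).card) (((y (k + 1))ᶜ).card) : ℝ) *
      maxOnZero ((y k) ×ˢ ((y (k + 1))ᶜ)) (fun p => Rmid (k + 1) p.1 p.2) ≤
      (min ((y k).card) (((y (k + 1))ᶜ).card) : ℝ) * τ := by
    intro k
    apply mul_le_mul_of_nonneg_left _ (le_min (Nat.cast_nonneg _) (Nat.cast_nonneg _))
    apply maxOnZero_le hτnn
    intro p hp
    rw [Finset.mem_product] at hp
    have h1 : τ < g k p.1 := (hymem _ _).1 hp.1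
    have h2 : g (k+1) p.2 ≤ τ := (hycmem _ _).1 hp.2
    have h3 : min (g k p.1) (Rmid (k+1) p.1 p.2) ≤ g (k+1) p.2 := by
      rw [hgsucc]; exact le_maxOnZero (f := fun i => min (g k i) (Rmid (k+1) i p.2)) (Finset.mem_univ p.1)
    by_contra hcon
    exact absurd (lt_min h1 (not_le.1 hcon)) (not_lt.2 (h3.trans h2))
  have hsumcoeff : ∑ k ∈ Finset.range (L - 1),
      (min ((y k).card) (((y (k + 1))ᶜ).card)) ≤ m * N := by
    rw [show L - 1 = 2 * m by omega, sum_range_two_mul]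
    calc ∑ p ∈ Finset.range m,
        (min ((y (2*p)).card) (((y (2*p + 1))ᶜ).card)
          + min ((y (2*p+1)).card) (((y (2*p+1 + 1))ᶜ).card))
        ≤ ∑ p ∈ Finset.range m, N := by
          apply Finset.sum_le_sum
          intro p _
          calc min ((y (2*p)).card) (((y (2*p + 1))ᶜ).card)
              + min ((y (2*p+1)).card) (((y (2*p+1 + 1))ᶜ).card)
              ≤ ((y (2*p + 1))ᶜ).card + (y (2*p+1)).card :=
                Nat.add_le_add (min_le_right _ _) (min_le_left _ _)
            _ = N := by
                rw [add_comm, Finset.card_add_card_compl, Fintype.card_fin]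
      _ = m * N := by rw [Finset.sum_const, Finset.card_range, smul_eq_mul]
  have hB : ∑ k ∈ Finset.range (L - 1),
      (min ((y k).card) (((y (k + 1))ᶜ).card) : ℝ) *
        maxOnZero ((y k) ×ˢ ((y (k + 1))ᶜ)) (fun p => Rmid (k + 1) p.1 p.2) ≤
      ((m : ℝ) * N) * τ := by
    calc _ ≤ ∑ k ∈ Finset.range (L - 1),
        (min ((y k).card) (((y (k + 1))ᶜ).card) : ℝ) * τ :=
          Finset.sum_le_sum fun k _ => hBterm k
      _ = ((∑ k ∈ Finset.range (L - 1),
          (min ((y k).card) (((y (k + 1))ᶜ).card)) : ℕ) : ℝ) * τ := by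
          push_cast [Nat.cast_min]
          rw [Finset.sum_mul]
      _ ≤ ((m : ℝ) * N) * τ := by
          apply mul_le_mul_of_nonneg_right _ hτnn
          exact_mod_cast hsumcoeff
  have hval : tildeCutValueR L N R0 Rmid RL y ≤ ((m : ℝ) * N + 2) * τ := by
    unfold tildeCutValueR
    have := hA; have := hB; have := hC
    nlinarith [hτnn]
  -- conclude
  refine ⟨i, ?_⟩
  have hmpos : (0:ℝ) < (m : ℝ) * N + 2 := by positivity
  have hKeq : ((L : ℝ) - 1) * (N : ℝ) + 4 = 2 * ((m : ℝ) * N + 2) := by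
    rw [hm]; push_cast; ring
  rw [hKeq, show (2:ℝ) / (2 * ((m : ℝ) * N + 2)) = ((m : ℝ) * N + 2)⁻¹ by
    field_simp]
  rw [inv_mul_le_iff₀ hmpos]
  calc tildeCapR L N R0 Rmid RL ≤ ((m : ℝ) * N + 2) * τ := hCle.trans hval
    _ ≤ ((m : ℝ) * N + 2) * pathCapR L N R0 Rmid RL i :=
        mul_le_mul_of_nonneg_left hpath hmpos.le
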